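/- arXiv:2203.12216 — 7 statements merged into one kernel-verified Lean document; each statement's English description precedes it below -/
import Mathlib

section
/- Let λ, μ > 0 and set ρ = λ/μ. Let X and S be independent random variables with X exponentially distributed with rate λ and S uniformly distributed on the interval (0, 2/μ). Then E[(X+S)²]/(2(E[X]+E[S])) + E[S] = (3+6ρ+5ρ²)/(3λ(1+ρ)). (This is the average age-upon-decisions of the M/U/1/1-M bufferless system.) -/
open MeasureTheory ProbabilityTheory Real

/-!
By independence, `E[(X+S)²] = E[X²] + 2 E[X] E[S] + E[S²]`. The Gamma integral gives the
exponential moments `E[Xⁿ] = n! / λⁿ`, and the uniform law on `(0, c)` has moments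
`E[Sⁿ] = cⁿ / (n+1)`; with `c = 2/μ` the left-hand side becomes
`(2/λ² + 2/(λμ) + 4/(3μ²)) / (2(1/λ + 1/μ)) + 1/μ`, which is the claimed rational function of `ρ`.
-/

open Set
open scoped ENNReal Nat

namespace ProbabilityTheory

section Exponential

variable {r : ℝ}

lemma toNNReal_exponentialPDFReal_smul (hr : 0 < r) (g : ℝ → ℝ) (x : ℝ) :
    (exponentialPDFReal r x).toNNReal • g x
      = (Ici 0).indicator (fun x ↦ r * exp (-(r * x)) * g x) x := by
  rw [NNReal.smul_def, smul_eq_mul, Real.coe_toNNReal _ (exponentialPDFReal_nonneg hr x)]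
  by_cases hx : 0 ≤ x <;> simp [exponentialPDFReal, gammaPDFReal, hx]

lemma expMeasure_eq_withDensity (r : ℝ) :
    expMeasure r = volume.withDensity fun x ↦ ((exponentialPDFReal r x).toNNReal : ℝ≥0∞) := rfl

lemma integrable_expMeasure_iff (hr : 0 < r) {g : ℝ → ℝ} :
    Integrable g (expMeasure r) ↔ IntegrableOn (fun x ↦ r * exp (-(r * x)) * g x) (Ioi 0) := by
  rw [expMeasure_eq_withDensity, integrable_withDensity_iff_integrable_smul
    (measurable_exponentialPDFReal r).real_toNNReal]
  simp_rw [toNNReal_exponentialPDFReal_smul hr]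
  rw [integrable_indicator_iff measurableSet_Ici, integrableOn_Ici_iff_integrableOn_Ioi]

lemma integral_expMeasure (hr : 0 < r) (g : ℝ → ℝ) :
    ∫ x, g x ∂expMeasure r = ∫ x in Ioi 0, r * exp (-(r * x)) * g x := by
  rw [expMeasure_eq_withDensity, integral_withDensity_eq_integral_smul
    (measurable_exponentialPDFReal r).real_toNNReal]
  simp_rw [toNNReal_exponentialPDFReal_smul hr]
  rw [integral_indicator measurableSet_Ici, integral_Ici_eq_integral_Ioi]

lemma integrable_pow_expMeasure (hr : 0 < r) (n : ℕ) :
    Integrable (fun x : ℝ ↦ x ^ n) (expMeasure r) := by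
  rw [integrable_expMeasure_iff hr]
  have h := integrableOn_rpow_mul_exp_neg_mul_rpow (s := n) (p := 1)
    (neg_one_lt_zero.trans_le n.cast_nonneg) one_pos hr
  refine IntegrableOn.congr_fun (h.const_mul r) (fun x _ ↦ ?_) measurableSet_Ioi
  simp only [rpow_one, rpow_natCast, neg_mul]
  ring

lemma integral_pow_expMeasure (hr : 0 < r) (n : ℕ) :
    ∫ x, x ^ n ∂expMeasure r = n ! / r ^ n := by
  have hGamma := integral_rpow_mul_exp_neg_mul_Ioi (a := n + 1) (by positivity) hr
  simp only [add_sub_cancel_right, rpow_natCast, Gamma_nat_eq_factorial] at hGamma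
  rw [integral_expMeasure hr]
  simp_rw [mul_assoc, mul_comm (exp _)]
  rw [integral_const_mul, hGamma, ← Nat.cast_add_one, rpow_natCast, one_div, inv_pow, pow_succ]
  field_simp

end Exponential

section UniformIoo

variable {c : ℝ}

lemma isProbabilityMeasure_smul_restrict_Ioo (hc : 0 < c) :
    IsProbabilityMeasure (ENNReal.ofReal c⁻¹ • volume.restrict (Ioo 0 c)) := by
  constructor
  rw [Measure.smul_apply, Measure.restrict_apply_univ, volume_Ioo, sub_zero, smul_eq_mul,
    ← ENNReal.ofReal_mul (by positivity), inv_mul_cancel₀ hc.ne', ENNReal.ofReal_one]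

lemma integrable_pow_smul_restrict_Ioo (n : ℕ) :
    Integrable (fun x : ℝ ↦ x ^ n) (ENNReal.ofReal c⁻¹ • volume.restrict (Ioo 0 c)) := by
  have h : IntegrableOn (fun x : ℝ ↦ x ^ n) (Ioo 0 c) :=
    (continuous_pow n).integrableOn_Icc.mono_set Ioo_subset_Icc_self
  exact h.smul_measure ENNReal.ofReal_ne_top

lemma integral_pow_smul_restrict_Ioo (hc : 0 < c) (n : ℕ) :
    ∫ x, x ^ n ∂(ENNReal.ofReal c⁻¹ • volume.restrict (Ioo 0 c)) = c ^ n / (n + 1) := by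
  rw [integral_smul_measure, ENNReal.toReal_ofReal (by positivity), ← integral_Ioc_eq_integral_Ioo,
    ← intervalIntegral.integral_of_le hc.le, integral_pow, smul_eq_mul]
  field_simp
  ring

end UniformIoo

lemma HasLaw.of_map_eq {Ω 𝓧 : Type*} {mΩ : MeasurableSpace Ω} {m𝓧 : MeasurableSpace 𝓧}
    {P : Measure Ω} {X : Ω → 𝓧} {μ : Measure 𝓧} [NeZero μ] (h : P.map X = μ) : HasLaw X μ P :=
  ⟨.of_map_ne_zero (h ▸ NeZero.ne μ), h⟩

lemma HasLaw.memLp_two {Ω : Type*} {mΩ : MeasurableSpace Ω} {P : Measure Ω} {X : Ω → ℝ}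
    {μ : Measure ℝ} (hX : HasLaw X μ P) (h : Integrable (fun x ↦ x ^ 2) μ) : MemLp X 2 P := by
  rw [← hX.map_eq] at h
  exact (memLp_map_measure_iff aestronglyMeasurable_id hX.aemeasurable).1
    ((memLp_two_iff_integrable_sq aestronglyMeasurable_id).2 h)

lemma IndepFun.integral_add_sq {Ω : Type*} {mΩ : MeasurableSpace Ω} {P : Measure Ω}
    [IsFiniteMeasure P] {X Y : Ω → ℝ} (hXY : IndepFun X Y P) (hX : MemLp X 2 P)
    (hY : MemLp Y 2 P) :
    ∫ ω, (X ω + Y ω) ^ 2 ∂P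
      = ∫ ω, X ω ^ 2 ∂P + 2 * ((∫ ω, X ω ∂P) * ∫ ω, Y ω ∂P) + ∫ ω, Y ω ^ 2 ∂P := by
  have hXY_int : Integrable (fun ω ↦ X ω * Y ω) P :=
    hXY.integrable_mul (hX.integrable one_le_two) (hY.integrable one_le_two)
  simp_rw [add_sq, mul_assoc]
  rw [integral_add (hX.integrable_sq.fun_add (hXY_int.const_mul 2)) hY.integrable_sq,
    integral_add hX.integrable_sq (hXY_int.const_mul 2), integral_const_mul,
    hXY.integral_fun_mul_eq_mul_integral hX.1 hY.1]

end ProbabilityTheory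

theorem stmt_1_general {Ω : Type*} [MeasurableSpace Ω] (P : Measure Ω) [IsProbabilityMeasure P]
    (lam mu rho : ℝ) (hlam : 0 < lam) (hmu : 0 < mu) (hrho : rho = lam / mu)
    (X S : Ω → ℝ)
    (hindep : IndepFun X S P)
    (hXdist : Measure.map X P = expMeasure lam)
    (hSdist : Measure.map S P
      = (ENNReal.ofReal (mu / 2)) • volume.restrict (Set.Ioo (0 : ℝ) (2 / mu))) :
    (∫ ω, (X ω + S ω) ^ 2 ∂P) / (2 * ((∫ ω, X ω ∂P) + ∫ ω, S ω ∂P)) + (∫ ω, S ω ∂P)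
      = (3 + 6 * rho + 5 * rho ^ 2) / (3 * lam * (1 + rho)) := by
  have hc : 0 < 2 / mu := by positivity
  rw [← inv_div 2 mu] at hSdist
  have := isProbabilityMeasure_expMeasure hlam
  have := isProbabilityMeasure_smul_restrict_Ioo hc
  have hXlaw := HasLaw.of_map_eq hXdist
  have hSlaw := HasLaw.of_map_eq hSdist
  have hEX (n : ℕ) : ∫ ω, X ω ^ n ∂P = n ! / lam ^ n :=
    (hXlaw.integral_comp (f := fun x ↦ x ^ n) (by fun_prop)).trans (integral_pow_expMeasure hlam n)
  have hES (n : ℕ) : ∫ ω, S ω ^ n ∂P = (2 / mu) ^ n / (n + 1) :=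
    (hSlaw.integral_comp (f := fun x ↦ x ^ n) (by fun_prop)).trans
      (integral_pow_smul_restrict_Ioo hc n)
  rw [hindep.integral_add_sq (hXlaw.memLp_two (integrable_pow_expMeasure hlam 2))
    (hSlaw.memLp_two (integrable_pow_smul_restrict_Ioo 2))]
  have hEX1 := hEX 1
  have hES1 := hES 1
  simp only [pow_one] at hEX1 hES1
  rw [hEX 2, hES 2, hEX1, hES1, hrho]
  field_simp
  ring

/-- The average age-upon-decisions of the M/U/1/1-M bufferless system:
`X` exponential with rate `lam`, `S` uniform on `(0, 2/mu)`, independent; with `ρ = lam/mu`,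
`E[(X+S)²]/(2(E[X]+E[S])) + E[S] = (3+6ρ+5ρ²)/(3·lam·(1+ρ))`. -/
theorem stmt_1 {Ω : Type*} [MeasurableSpace Ω] (P : Measure Ω) [IsProbabilityMeasure P]
    (lam mu rho : ℝ) (hlam : 0 < lam) (hmu : 0 < mu) (hrho : rho = lam / mu)
    (X S : Ω → ℝ) (hX : Measurable X) (hS : Measurable S)
    (hindep : IndepFun X S P)
    (hXdist : Measure.map X P = expMeasure lam)
    (hSdist : Measure.map S P
      = (ENNReal.ofReal (mu / 2)) • volume.restrict (Set.Ioo (0 : ℝ) (2 / mu))) :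
    (∫ ω, (X ω + S ω) ^ 2 ∂P) / (2 * ((∫ ω, X ω ∂P) + ∫ ω, S ω ∂P)) + (∫ ω, S ω ∂P)
      = (3 + 6 * rho + 5 * rho ^ 2) / (3 * lam * (1 + rho)) :=
  stmt_1_general P lam mu rho hlam hmu hrho X S hindep hXdist hSdist
end

section
/- For all λ, μ, ν > 0, the following strict inequalities hold: (λ/(λ+ν))·e^{−ν/μ} < λμ(1 − e^{−2ν/μ})/(2ν(λ+ν)) < λμ/((λ+ν)(μ+ν)). That is, for M/G/1/1-M bufferless systems with the same arrival rate λ, service rate μ and decision rate ν, the missing probability under deterministic service time is strictly smaller than under uniform service time, which is strictly smaller than under exponential service time. -/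
/-!
With `x = ν/μ`, each of the three missing probabilities is `λ/(λ+ν)` times, respectively,
`e^{-x}`, `(1 - e^{-2x})/(2x)` and `1/(1+x)`. Since `1 - e^{-2x} = 2 e^{-x} sinh x` and
`e^{x} = cosh x + sinh x`, the two comparisons reduce to `x < sinh x` and to
`sinh x < x cosh x` (that is, `tanh x < x`); the latter holds because `x cosh x - sinh x`
vanishes at `0` and has derivative `x sinh x > 0`.
-/

open Real Set

namespace Real

theorem sinh_lt_mul_cosh {x : ℝ} (hx : 0 < x) : sinh x < x * cosh x := by
  let g : ℝ → ℝ := fun y => y * cosh y - sinh y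
  have hg : ∀ y, HasDerivAt g (y * sinh y) y := fun y =>
    (((hasDerivAt_id' y).mul (hasDerivAt_cosh y)).sub (hasDerivAt_sinh y)).congr_deriv (by ring)
  have hmono : StrictMonoOn g (Ici 0) := by
    refine strictMonoOn_of_deriv_pos (convex_Ici 0)
      (fun y _ => (hg y).continuousAt.continuousWithinAt) fun y hy => ?_
    rw [interior_Ici, mem_Ioi] at hy
    rw [(hg y).deriv]
    exact mul_pos hy (sinh_pos_iff.mpr hy)
  have := hmono self_mem_Ici hx.le hx
  simp only [g, zero_mul, cosh_zero, sinh_zero, sub_zero] at this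
  linarith

theorem one_sub_exp_neg_two_mul (x : ℝ) : 1 - exp (-2 * x) = 2 * exp (-x) * sinh x := by
  have hsq : exp (-2 * x) = exp (-x) * exp (-x) := by rw [← exp_add]; ring_nf
  have hinv : exp (-x) * exp x = 1 := by rw [← exp_add]; simp
  rw [sinh_eq, hsq]
  linear_combination -hinv

theorem exp_neg_lt_one_sub_exp_neg_two_mul_div {x : ℝ} (hx : 0 < x) :
    exp (-x) < (1 - exp (-2 * x)) / (2 * x) := by
  rw [lt_div_iff₀ (by positivity), one_sub_exp_neg_two_mul]
  nlinarith [exp_pos (-x), self_lt_sinh_iff.mpr hx]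

theorem one_sub_exp_neg_two_mul_div_lt_inv {x : ℝ} (hx : 0 < x) :
    (1 - exp (-2 * x)) / (2 * x) < (1 + x)⁻¹ := by
  have hexp : exp (-x) * (cosh x + sinh x) = 1 := by
    rw [cosh_add_sinh, ← exp_add]; simp
  rw [div_lt_iff₀ (by positivity), one_sub_exp_neg_two_mul]
  field_simp
  nlinarith [exp_pos (-x), sinh_lt_mul_cosh hx]

end Real

/-- For M/G/1/1-M bufferless systems with the same arrival rate `lam`, service rate `mu`
and decision rate `nu`, the missing probability under deterministic service time is strictly
smaller than under uniform service time, which is strictly smaller than under exponential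
service time:
`(λ/(λ+ν))·e^{−ν/μ} < λμ(1 − e^{−2ν/μ})/(2ν(λ+ν)) < λμ/((λ+ν)(μ+ν))`. -/
theorem stmt_9 (lam mu nu : ℝ) (hlam : 0 < lam) (hmu : 0 < mu) (hnu : 0 < nu) :
    (lam / (lam + nu)) * Real.exp (-nu / mu)
      < lam * mu * (1 - Real.exp (-2 * nu / mu)) / (2 * nu * (lam + nu)) ∧
    lam * mu * (1 - Real.exp (-2 * nu / mu)) / (2 * nu * (lam + nu))
      < lam * mu / ((lam + nu) * (mu + nu)) := by
  have hx : 0 < nu / mu := div_pos hnu hmu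
  have hc : 0 < lam / (lam + nu) := by positivity
  have huniform : lam * mu * (1 - exp (-2 * nu / mu)) / (2 * nu * (lam + nu))
      = lam / (lam + nu) * ((1 - exp (-2 * (nu / mu))) / (2 * (nu / mu))) := by
    rw [mul_div_assoc (-2)]
    field_simp
  have hexponential :
      lam * mu / ((lam + nu) * (mu + nu)) = lam / (lam + nu) * (1 + nu / mu)⁻¹ := by
    field_simp
  rw [huniform, hexponential, neg_div]
  exact ⟨mul_lt_mul_of_pos_left (exp_neg_lt_one_sub_exp_neg_two_mul_div hx) hc,
    mul_lt_mul_of_pos_left (one_sub_exp_neg_two_mul_div_lt_inv hx) hc⟩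
end

section
/- Let λ, μ > 0 with ρ = λ/μ, let m₀ ≥ 1 be real and set ν = m₀μ. Let X, S, θ be mutually independent random variables with X exponentially distributed with rate λ, S uniformly distributed on (0, 2/μ), and θ uniformly distributed on (0, 1/ν). Then P(X + S + θ < 1/ν) = 1/(4m₀) + (m₀(1 − e^{−ρ/m₀}) − ρ)/(2ρ²). (This is the missing probability of the M/U/1/1-D bufferless system.) -/
open MeasureTheory ProbabilityTheory Real Set
open scoped ENNReal

/-!
With `c = 1/ν`, independence makes the law of `X + S + θ` the convolution of the three laws, so
the probability is `∫∫ P(θ < c - x - s) dS dX`. For `x, s ≥ 0` the uniform `θ` contributes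
`ν (c - x - s)`; integrating over the uniform `S` gives `(νμ/4) ((c - x)⁺)²`, as the whole range
`0 < s < c - x` lies inside `(0, 2/μ)` because `m₀ ≥ 1`. The remaining integral against the
exponential density is `∫₀ᶜ λ e^{-λx} (c - x)² dx`, computed from an explicit antiderivative.
-/

lemma ProbabilityTheory.iIndepFun.map_add_add_eq_conv {Ω M : Type*} {mΩ : MeasurableSpace Ω}
    {P : Measure Ω} [IsFiniteMeasure P] [AddMonoid M] [MeasurableSpace M] [MeasurableAdd₂ M]
    {X Y Z : Ω → M} (h : iIndepFun ![X, Y, Z] P)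
    (hX : Measurable X) (hY : Measurable Y) (hZ : Measurable Z) :
    P.map (X + Y + Z) = (P.map X ∗ P.map Y) ∗ P.map Z := by
  have hmeas : ∀ i, Measurable (![X, Y, Z] i) := fun i => by fin_cases i <;> assumption
  have hXY : IndepFun X Y P := by simpa using h.indepFun (show (0 : Fin 3) ≠ 1 by decide)
  have hXYZ : IndepFun (X + Y) Z P := h.indepFun_add_left hmeas 0 1 2 (by decide) (by decide)
  rw [hXYZ.map_add_eq_map_conv_map (hX.add hY) hZ, hXY.map_add_eq_map_conv_map hX hY]

lemma MeasureTheory.Measure.conv_apply_Iio (μ ν : Measure ℝ) [SFinite ν] (c : ℝ) :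
    (μ ∗ ν) (Iio c) = ∫⁻ x, ν (Iio (c - x)) ∂μ := by
  rw [← lintegral_indicator_one measurableSet_Iio,
    lintegral_conv (measurable_one.indicator measurableSet_Iio)]
  refine lintegral_congr fun x => ?_
  rw [← lintegral_indicator_one measurableSet_Iio]
  congr with y
  simp [indicator, lt_sub_iff_add_lt']

lemma setLIntegral_Ioo_ofReal_sub {a B : ℝ} (haB : a ≤ B) :
    ∫⁻ s in Ioo 0 B, ENNReal.ofReal (a - s) = ENNReal.ofReal (max a 0 ^ 2 / 2) := by
  rcases le_or_gt a 0 with ha | ha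
  · rw [max_eq_right ha, setLIntegral_congr_fun measurableSet_Ioo fun s hs =>
      ENNReal.ofReal_eq_zero.2 (by linarith [hs.1] : a - s ≤ 0)]
    simp
  have hsupp : (fun s => ENNReal.ofReal (a - s)).support ⊆ Iio a := fun s hs => by
    by_contra h
    exact hs (ENNReal.ofReal_eq_zero.2 (by simpa using h))
  rw [← setLIntegral_eq_of_support_subset hsupp, Measure.restrict_restrict measurableSet_Iio,
    Iio_inter_Ioo, min_eq_left haB, ← ofReal_integral_eq_lintegral_ofReal,
    ← integral_Ioc_eq_integral_Ioo, ← intervalIntegral.integral_of_le ha.le, max_eq_left ha.le]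
  · congr 1
    simp [intervalIntegral.integral_comp_sub_left fun x => x]
  · exact (continuous_const.sub continuous_id).integrableOn_Icc.mono_set Ioo_subset_Icc_self
  · filter_upwards [ae_restrict_mem measurableSet_Ioo] with s hs
    exact sub_nonneg.2 hs.2.le

lemma setLIntegral_Ici_ofReal_eq_intervalIntegral {h : ℝ → ℝ} {c : ℝ} (hc : 0 ≤ c)
    (hcont : ContinuousOn h (Icc 0 c)) (hnn : ∀ x ∈ Icc 0 c, 0 ≤ h x)
    (hzero : ∀ x, c < x → h x = 0) :
    ∫⁻ x in Ici 0, ENNReal.ofReal (h x) = ENNReal.ofReal (∫ x in 0..c, h x) := by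
  have hsupp : (fun x => ENNReal.ofReal (h x)).support ⊆ Iic c := fun x hx => by
    by_contra hxc
    exact hx (by simp [hzero x (not_le.1 hxc)])
  rw [← setLIntegral_eq_of_support_subset hsupp, Measure.restrict_restrict measurableSet_Iic,
    Iic_inter_Ici, ← ofReal_integral_eq_lintegral_ofReal hcont.integrableOn_Icc
      ((ae_restrict_iff' measurableSet_Icc).2 (ae_of_all _ hnn)),
    integral_Icc_eq_integral_Ioc, intervalIntegral.integral_of_le hc]

lemma ProbabilityTheory.lintegral_expMeasure (r : ℝ) (f : ℝ → ℝ≥0∞) :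
    ∫⁻ x, f x ∂expMeasure r = ∫⁻ x in Ici 0, ENNReal.ofReal (r * exp (-(r * x))) * f x := by
  rw [expMeasure, gammaMeasure, lintegral_withDensity_eq_lintegral_mul_non_measurable _
    (show Measurable (gammaPDF 1 r) from (measurable_gammaPDFReal 1 r).ennreal_ofReal)
    (ae_of_all _ fun _ => ENNReal.ofReal_lt_top),
    ← lintegral_indicator measurableSet_Ici]
  refine lintegral_congr fun x => ?_
  rcases lt_or_ge x 0 with hx | hx
  · simp [hx, gammaPDF_of_neg hx]
  · rw [indicator_of_mem (mem_Ici.2 hx), Pi.mul_apply,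
      show gammaPDF 1 r = exponentialPDF r from rfl, exponentialPDF_of_nonneg hx]

lemma integral_mul_exp_neg_mul_mul_sub_sq {r : ℝ} (hr : r ≠ 0) (c : ℝ) :
    ∫ x in 0..c, r * exp (-(r * x)) * (c - x) ^ 2
      = c ^ 2 - 2 * c / r + 2 * (1 - exp (-(r * c))) / r ^ 2 := by
  have hderiv : ∀ x ∈ uIcc 0 c, HasDerivAt
      (fun x => -(exp (-(r * x)) * ((c - x) ^ 2 - 2 * (c - x) / r + 2 / r ^ 2)))
      (r * exp (-(r * x)) * (c - x) ^ 2) x := by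
    intro x _
    have hexp : HasDerivAt (fun x => exp (-(r * x))) (exp (-(r * x)) * -r) x := by
      simpa using (((hasDerivAt_id x).const_mul r).neg).exp
    have hu : HasDerivAt (fun x => c - x) (-1) x := (hasDerivAt_id x).const_sub c
    refine ((hexp.mul (((hu.pow 2).sub (hu.const_mul 2 |>.div_const r)).add_const
      (2 / r ^ 2))).neg).congr_deriv ?_
    push_cast
    simp only [Pi.sub_apply, Pi.pow_apply]
    field_simp
    ring
  rw [intervalIntegral.integral_eq_sub_of_hasDerivAt hderiv
    ((by fun_prop : Continuous fun x => r * exp (-(r * x)) * (c - x) ^ 2).intervalIntegrable _ _)]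
  simp only [mul_zero, neg_zero, exp_zero, sub_zero, sub_self]
  field_simp
  ring

/-- The missing probability of the M/U/1/1-D bufferless system: with `ρ = λ/μ`, `ν = m₀μ`,
`X` exponential of rate `λ`, `S` uniform on `(0, 2/μ)`, `θ` uniform on `(0, 1/ν)`, mutually
independent, `P(X + S + θ < 1/ν) = 1/(4m₀) + (m₀(1 − e^{−ρ/m₀}) − ρ)/(2ρ²)`. -/
theorem stmt_13 {Ω : Type*} [MeasurableSpace Ω] (P : Measure Ω) [IsProbabilityMeasure P]
    (lam mu rho m₀ nu : ℝ) (hlam : 0 < lam) (hmu : 0 < mu) (hrho : rho = lam / mu)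
    (hm₀ : 1 ≤ m₀) (hnu : nu = m₀ * mu)
    (X S T : Ω → ℝ) (hX : Measurable X) (hS : Measurable S) (hT : Measurable T)
    (hindep : iIndepFun ![X, S, T] P)
    (hXdist : Measure.map X P = expMeasure lam)
    (hSdist : Measure.map S P
      = (ENNReal.ofReal (mu / 2)) • volume.restrict (Set.Ioo (0 : ℝ) (2 / mu)))
    (hTdist : Measure.map T P
      = (ENNReal.ofReal nu) • volume.restrict (Set.Ioo (0 : ℝ) (1 / nu))) :
    P {ω | X ω + S ω + T ω < 1 / nu}
      = ENNReal.ofReal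
          (1 / (4 * m₀) + (m₀ * (1 - Real.exp (-rho / m₀)) - rho) / (2 * rho ^ 2)) := by
  have hnu0 : 0 < nu := hnu ▸ mul_pos (by linarith) hmu
  set c := 1 / nu with hc
  have hcS : c ≤ 2 / mu := by
    rw [hc, hnu, div_le_div_iff₀ (by positivity) hmu]
    nlinarith
  have hT_Iio (y : ℝ) (hy : 0 ≤ y) :
      P.map T (Iio (c - y)) = ENNReal.ofReal nu * ENNReal.ofReal (c - y) := by
    rw [hTdist, Measure.smul_apply, Measure.restrict_apply measurableSet_Iio, Iio_inter_Ioo,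
      min_eq_left (by linarith), Real.volume_Ioo, sub_zero, smul_eq_mul]
  have hS_int (x : ℝ) (hx : 0 ≤ x) :
      ∫⁻ s, P.map T (Iio (c - (x + s))) ∂P.map S
        = ENNReal.ofReal (nu * mu / 4 * max (c - x) 0 ^ 2) := by
    rw [hSdist, lintegral_smul_measure,
      setLIntegral_congr_fun measurableSet_Ioo fun s hs => by
        rw [hT_Iio _ (by linarith [hs.1]), sub_add_eq_sub_sub],
      lintegral_const_mul' _ _ ENNReal.ofReal_ne_top,
      setLIntegral_Ioo_ofReal_sub (by linarith), smul_eq_mul,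
      ← ENNReal.ofReal_mul hnu0.le, ← ENNReal.ofReal_mul (by positivity)]
    congr 1
    ring
  have hantitone : Antitone fun y => P.map T (Iio (c - y)) := fun y z hyz =>
    measure_mono (Iio_subset_Iio (by linarith))
  calc P {ω | X ω + S ω + T ω < c}
      = P.map (X + S + T) (Iio c) := by
        rw [Measure.map_apply ((hX.add hS).add hT) measurableSet_Iio]; rfl
    _ = ∫⁻ x, ∫⁻ s, P.map T (Iio (c - (x + s))) ∂P.map S ∂P.map X := by
        rw [hindep.map_add_add_eq_conv hX hS hT, Measure.conv_apply_Iio,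
          Measure.lintegral_conv hantitone.measurable]
    _ = ∫⁻ x in Ici 0, ENNReal.ofReal
          (lam * exp (-(lam * x)) * (nu * mu / 4 * max (c - x) 0 ^ 2)) := by
        rw [hXdist, lintegral_expMeasure]
        refine setLIntegral_congr_fun measurableSet_Ici fun x hx => ?_
        rw [hS_int x hx, ← ENNReal.ofReal_mul (by positivity)]
    _ = ENNReal.ofReal (nu * mu / 4 * ∫ x in 0..c, lam * exp (-(lam * x)) * (c - x) ^ 2) := by
        rw [setLIntegral_Ici_ofReal_eq_intervalIntegral (c := c) (by positivity) (by fun_prop)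
          (fun x _ => by positivity)
          (fun x hx => by simp [max_eq_right (by linarith : c - x ≤ 0)]),
          ← intervalIntegral.integral_const_mul]
        congr 1
        refine intervalIntegral.integral_congr fun x hx => ?_
        rw [uIcc_of_le (by positivity)] at hx
        simp only [max_eq_left (sub_nonneg.2 hx.2)]
        ring
    _ = _ := by
        rw [integral_mul_exp_neg_mul_mul_sub_sq hlam.ne']
        have hexp : -(lam * c) = -rho / m₀ := by
          rw [hc, hnu, hrho]
          field_simp
        rw [hexp, hc, hnu, hrho]
        congr 1
        field_simp
        ring
end

section
/- Fix μ, ρ > 0. For every real m₀ ≥ 1, with α = e^{−1/m₀} and β = e^{−ρ/m₀}, one has Δ_D(m₀) < Δ_M(m₀), i.e. (4+3ρ)/(2μ(1+ρ)) + (1+β)/(2μm₀(1+ρ)(1−β)) < (2+ρ)/(μ(1+ρ)) + ρ(1+α)/(2μm₀(1+ρ)(1−α)) + (1+β)/(2μm₀(1+ρ)(1−β)). Equivalently, (1+α)/(m₀(1−α)) > 1 for α = e^{−1/m₀}, m₀ ≥ 1. -/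
open Real

lemma key_ineq (m₀ : ℝ) (hm₀ : 1 ≤ m₀) :
    m₀ * (1 - Real.exp (-1 / m₀)) < 1 + Real.exp (-1 / m₀) := by
  have hm0 : 0 < m₀ := lt_of_lt_of_le one_pos hm₀
  set x : ℝ := 1 / m₀ with hx
  have hx0 : 0 < x := by positivity
  have hx1 : x ≤ 1 := by
    rw [hx, div_le_one hm0]; exact hm₀
  have hne : -x ≠ 0 := by linarith
  have hexp : 1 + (-x) < Real.exp (-x) := by linarith [Real.add_one_lt_exp hne]
  have h1 : (1 - x) * (1 + x) < Real.exp (-x) * (1 + x) := by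
    apply mul_lt_mul_of_pos_right _ (by linarith)
    linarith
  have h2 : 1 - x ≤ (1 - x) * (1 + x) := by nlinarith
  have hkey : 1 - x < Real.exp (-x) * (1 + x) := lt_of_le_of_lt h2 h1
  have hmx : m₀ * x = 1 := by
    rw [hx]; field_simp
  have hneg : (-1 : ℝ) / m₀ = -x := by rw [hx]; ring
  rw [hneg]
  -- goal : m₀ * (1 - exp (-x)) < 1 + exp (-x)
  -- multiply hkey by m₀ : m₀ - m₀*x < m₀*exp(-x)*(1+x) i.e. m₀ - 1 < m₀*exp(-x) + exp(-x)
  nlinarith [mul_lt_mul_of_pos_left hkey hm0, Real.exp_pos (-x)]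

/-- For all `μ, ρ > 0` and real `m₀ ≥ 1`, with `α = e^{−1/m₀}` and `β = e^{−ρ/m₀}`,
the average AuD of the M/D/1/1-D bufferless system is strictly smaller than that of the
M/M/1/1-D system: `Δ_D(m₀) < Δ_M(m₀)`. -/
theorem stmt_15 (mu rho : ℝ) (hmu : 0 < mu) (hrho : 0 < rho)
    (m₀ : ℝ) (hm₀ : 1 ≤ m₀)
    (alpha beta : ℝ) (halpha : alpha = Real.exp (-1 / m₀)) (hbeta : beta = Real.exp (-rho / m₀)) :
    (4 + 3 * rho) / (2 * mu * (1 + rho))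
        + (1 + beta) / (2 * mu * m₀ * (1 + rho) * (1 - beta))
      < (2 + rho) / (mu * (1 + rho))
        + rho * (1 + alpha) / (2 * mu * m₀ * (1 + rho) * (1 - alpha))
        + (1 + beta) / (2 * mu * m₀ * (1 + rho) * (1 - beta)) := by
  have hm0 : 0 < m₀ := lt_of_lt_of_le one_pos hm₀
  have hkey : m₀ * (1 - alpha) < 1 + alpha := by rw [halpha]; exact key_ineq m₀ hm₀
  have ha1 : alpha < 1 := by
    rw [halpha]
    have h : (-1:ℝ) / m₀ < 0 := div_neg_of_neg_of_pos (by norm_num) hm0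
    calc Real.exp (-1 / m₀) < Real.exp 0 := Real.exp_lt_exp.mpr h
      _ = 1 := Real.exp_zero
  have ha0 : 0 < alpha := by rw [halpha]; exact Real.exp_pos _
  have h1a : 0 < 1 - alpha := by linarith
  have hr1 : 0 < 1 + rho := by linarith
  suffices h : (4 + 3 * rho) / (2 * mu * (1 + rho))
      < (2 + rho) / (mu * (1 + rho))
        + rho * (1 + alpha) / (2 * mu * m₀ * (1 + rho) * (1 - alpha)) by
    linarith
  rw [div_add_div _ _ (by positivity) (by positivity), div_lt_div_iff₀ (by positivity) (by positivity)]
  nlinarith [mul_pos hmu hr1, mul_pos (mul_pos hmu hr1) (mul_pos hrho (sub_pos.mpr hkey)),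
    mul_pos (mul_pos (mul_pos hmu hmu) (mul_pos hr1 hr1)) (mul_pos hrho (sub_pos.mpr hkey))]
end

section
/- Fix μ, ρ > 0. For every real m₀ ≥ 1, with β = e^{−ρ/m₀}, one has Δ_D(m₀) < Δ_U(m₀), i.e. (4+3ρ)/(2μ(1+ρ)) + (1+β)/(2μm₀(1+ρ)(1−β)) < (2ρm₀+4m₀+ρ+1)/(2μm₀(1+ρ)) + (1+β)/(2μm₀(1+ρ)(1−β)) + ρ(8m₀³+18m₀²+13m₀+3)/(12μm₀³(1+ρ)). -/
open Real

/-- For all `μ, ρ > 0` and real `m₀ ≥ 1`, with `β = e^{−ρ/m₀}`, the average AuD of the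
M/D/1/1-D bufferless system is strictly smaller than that of the M/U/1/1-D system:
`Δ_D(m₀) < Δ_U(m₀)`. -/
theorem stmt_16 (mu rho : ℝ) (hmu : 0 < mu) (hrho : 0 < rho)
    (m₀ : ℝ) (hm₀ : 1 ≤ m₀)
    (beta : ℝ) (hbeta : beta = Real.exp (-rho / m₀)) :
    (4 + 3 * rho) / (2 * mu * (1 + rho))
        + (1 + beta) / (2 * mu * m₀ * (1 + rho) * (1 - beta))
      < (2 * rho * m₀ + 4 * m₀ + rho + 1) / (2 * mu * m₀ * (1 + rho))
        + (1 + beta) / (2 * mu * m₀ * (1 + rho) * (1 - beta))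
        + rho * (8 * m₀ ^ 3 + 18 * m₀ ^ 2 + 13 * m₀ + 3) / (12 * mu * m₀ ^ 3 * (1 + rho)) := by
  have hm : (0:ℝ) < m₀ := lt_of_lt_of_le one_pos hm₀
  have e : (2 * rho * m₀ + 4 * m₀ + rho + 1) / (2 * mu * m₀ * (1 + rho))
        + rho * (8 * m₀ ^ 3 + 18 * m₀ ^ 2 + 13 * m₀ + 3) / (12 * mu * m₀ ^ 3 * (1 + rho))
        - (4 + 3 * rho) / (2 * mu * (1 + rho))
      = (2 * rho * m₀ ^ 3 + 24 * rho * m₀ ^ 2 + 6 * m₀ ^ 2 + 13 * rho * m₀ + 3 * rho)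
          / (12 * mu * m₀ ^ 3 * (1 + rho)) := by
    field_simp
    ring
  have hpos : (0:ℝ) < (2 * rho * m₀ ^ 3 + 24 * rho * m₀ ^ 2 + 6 * m₀ ^ 2 + 13 * rho * m₀ + 3 * rho)
      / (12 * mu * m₀ ^ 3 * (1 + rho)) := by positivity
  linarith
end

section
/- Fix μ, ρ > 0 and let λ = ρμ. For every real m₀ ≥ 1, with α = e^{−1/m₀} and β = e^{−ρ/m₀}: (i) Δ_U(m₀) ≥ (3+6ρ+5ρ²)/(3λ(1+ρ)); (ii) Δ_M(m₀) ≥ (1+2ρ+2ρ²)/(λ(1+ρ)); (iii) Δ_D(m₀) ≥ (2+4ρ+3ρ²)/(2λ(1+ρ)). That is, for the same service rate and decision rate, the average age-upon-decisions under periodic decisions is at least that under Poisson decisions, for each of the uniform, exponential and deterministic service time distributions. -/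
/-!
Write each Poisson age as a rational part plus `1 / (λ (1 + ρ))` (plus `ρ / (μ (1 + ρ))` for
exponential service). The periodic age has the same rational part, up to a manifestly positive
rational function of `m₀` for uniform service, and carries `(1 + β) / (2 μ m₀ (1 + ρ) (1 - β))`
(and the analogous `α`-term) in place of the remaining terms. With `x = ρ / m₀` (resp. `1 / m₀`),
comparing these amounts to `(1 + e^{-x}) / (1 - e^{-x}) ≥ 2 / x`, i.e. `tanh (x / 2) ≤ x / 2`,
which holds because `x + (x + 2) e^{-x}` is increasing (its derivative is `1 - (x + 1) e^{-x} ≥ 0`).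
-/

open Real

/-- Approximate average AuD of the M/U/1/1-D bufferless system. -/
noncomputable def ΔU (mu rho m₀ : ℝ) : ℝ :=
  (2 * rho * m₀ + 4 * m₀ + rho + 1) / (2 * mu * m₀ * (1 + rho))
    + (1 + Real.exp (-rho / m₀)) / (2 * mu * m₀ * (1 + rho) * (1 - Real.exp (-rho / m₀)))
    + rho * (8 * m₀ ^ 3 + 18 * m₀ ^ 2 + 13 * m₀ + 3) / (12 * mu * m₀ ^ 3 * (1 + rho))

/-- Approximate average AuD of the M/M/1/1-D bufferless system. -/
noncomputable def ΔM (mu rho m₀ : ℝ) : ℝ :=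
  (2 + rho) / (mu * (1 + rho))
    + rho * (1 + Real.exp (-1 / m₀)) / (2 * mu * m₀ * (1 + rho) * (1 - Real.exp (-1 / m₀)))
    + (1 + Real.exp (-rho / m₀)) / (2 * mu * m₀ * (1 + rho) * (1 - Real.exp (-rho / m₀)))

/-- Approximate average AuD of the M/D/1/1-D bufferless system. -/
noncomputable def ΔD (mu rho m₀ : ℝ) : ℝ :=
  (4 + 3 * rho) / (2 * mu * (1 + rho))
    + (1 + Real.exp (-rho / m₀)) / (2 * mu * m₀ * (1 + rho) * (1 - Real.exp (-rho / m₀)))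

lemma two_mul_one_sub_exp_neg_le {x : ℝ} (hx : 0 ≤ x) :
    2 * (1 - exp (-x)) ≤ x * (1 + exp (-x)) := by
  set g : ℝ → ℝ := fun y => y + (y + 2) * exp (-y)
  have hg : ∀ y, HasDerivAt g (1 - (y + 1) * exp (-y)) y := fun y => by
    have := (hasDerivAt_id y).add (((hasDerivAt_id y).add_const 2).mul (hasDerivAt_neg y).exp)
    refine this.congr_deriv ?_
    simp only [id_eq]
    ring
  have hg_mono : Monotone g := by
    refine monotone_of_deriv_nonneg (fun y => (hg y).differentiableAt) fun y => ?_
    rw [(hg y).deriv, sub_nonneg, exp_neg, ← div_eq_mul_inv, div_le_one (exp_pos y)]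
    exact add_one_le_exp y
  have := hg_mono hx
  simp only [g, neg_zero, exp_zero] at this
  linarith

lemma two_div_le_one_add_exp_neg_div_one_sub_exp_neg {x : ℝ} (hx : 0 < x) :
    2 / x ≤ (1 + exp (-x)) / (1 - exp (-x)) := by
  have : 0 < 1 - exp (-x) := sub_pos.2 (exp_lt_one_iff.2 (neg_lt_zero.2 hx))
  rw [div_le_div_iff₀ hx this]
  linarith [two_mul_one_sub_exp_neg_le hx.le]

lemma one_sub_exp_neg_div_ne_zero {c m : ℝ} (hc : 0 < c) (hm : 0 < m) :
    1 - exp (-c / m) ≠ 0 :=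
  (sub_pos.2 (exp_lt_one_iff.2 (div_neg_of_neg_of_pos (neg_lt_zero.2 hc) hm))).ne'

section AgeUponDecisions

variable {mu rho m₀ : ℝ}

lemma one_div_mul_le_one_add_exp_neg_div {c : ℝ} (hc : 0 < c) (hmu : 0 < mu) (hrho : 0 < rho)
    (hm₀ : 0 < m₀) :
    1 / (c * mu * (1 + rho)) ≤
      (1 + exp (-c / m₀)) / (2 * mu * m₀ * (1 + rho) * (1 - exp (-c / m₀))) := by
  have key := two_div_le_one_add_exp_neg_div_one_sub_exp_neg (div_pos hc hm₀)
  rw [div_div_eq_mul_div, ← neg_div] at key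
  calc 1 / (c * mu * (1 + rho)) = 2 * m₀ / c / (2 * mu * m₀ * (1 + rho)) := by field_simp
    _ ≤ (1 + exp (-c / m₀)) / (1 - exp (-c / m₀)) / (2 * mu * m₀ * (1 + rho)) := by gcongr
    _ = _ := by rw [div_div, mul_comm (1 - _)]

lemma div_le_ΔU (hmu : 0 < mu) (hrho : 0 < rho) (hm₀ : 0 < m₀) :
    (3 + 6 * rho + 5 * rho ^ 2) / (3 * (rho * mu) * (1 + rho)) ≤ ΔU mu rho m₀ := by
  have hβ := one_div_mul_le_one_add_exp_neg_div hrho hmu hrho hm₀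
  have hgap : ΔU mu rho m₀ - (3 + 6 * rho + 5 * rho ^ 2) / (3 * (rho * mu) * (1 + rho)) =
      ((1 + exp (-rho / m₀)) / (2 * mu * m₀ * (1 + rho) * (1 - exp (-rho / m₀)))
        - 1 / (rho * mu * (1 + rho)))
      + (6 * (1 + rho) * m₀ ^ 2 + 18 * rho * m₀ ^ 2 + 13 * rho * m₀ + 3 * rho)
        / (12 * mu * m₀ ^ 3 * (1 + rho)) := by
    have := one_sub_exp_neg_div_ne_zero hrho hm₀
    unfold ΔU
    field_simp
    ring
  have : 0 ≤ (6 * (1 + rho) * m₀ ^ 2 + 18 * rho * m₀ ^ 2 + 13 * rho * m₀ + 3 * rho)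
      / (12 * mu * m₀ ^ 3 * (1 + rho)) := by positivity
  linarith

lemma div_le_ΔM (hmu : 0 < mu) (hrho : 0 < rho) (hm₀ : 0 < m₀) :
    (1 + 2 * rho + 2 * rho ^ 2) / (rho * mu * (1 + rho)) ≤ ΔM mu rho m₀ := by
  have hβ := one_div_mul_le_one_add_exp_neg_div hrho hmu hrho hm₀
  have hα := one_div_mul_le_one_add_exp_neg_div one_pos hmu hrho hm₀
  have hgap : ΔM mu rho m₀ - (1 + 2 * rho + 2 * rho ^ 2) / (rho * mu * (1 + rho)) =
      ((1 + exp (-rho / m₀)) / (2 * mu * m₀ * (1 + rho) * (1 - exp (-rho / m₀)))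
        - 1 / (rho * mu * (1 + rho)))
      + rho * ((1 + exp (-1 / m₀)) / (2 * mu * m₀ * (1 + rho) * (1 - exp (-1 / m₀)))
        - 1 / (1 * mu * (1 + rho))) := by
    have := one_sub_exp_neg_div_ne_zero hrho hm₀
    have := one_sub_exp_neg_div_ne_zero one_pos hm₀
    unfold ΔM
    field_simp
    ring
  have := mul_nonneg hrho.le (sub_nonneg.2 hα)
  linarith

lemma div_le_ΔD (hmu : 0 < mu) (hrho : 0 < rho) (hm₀ : 0 < m₀) :
    (2 + 4 * rho + 3 * rho ^ 2) / (2 * (rho * mu) * (1 + rho)) ≤ ΔD mu rho m₀ := by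
  have hβ := one_div_mul_le_one_add_exp_neg_div hrho hmu hrho hm₀
  have hsplit : (2 + 4 * rho + 3 * rho ^ 2) / (2 * (rho * mu) * (1 + rho)) =
      (4 + 3 * rho) / (2 * mu * (1 + rho)) + 1 / (rho * mu * (1 + rho)) := by
    field_simp
    ring
  rw [hsplit, ΔD]
  gcongr

end AgeUponDecisions

/-- For the same service rate and decision rate, the average age-upon-decisions under
periodic decisions is at least that under Poisson decisions, for uniform, exponential
and deterministic service times (`λ = ρμ`). -/
theorem stmt_18 (mu rho lam : ℝ) (hmu : 0 < mu) (hrho : 0 < rho) (hlam : lam = rho * mu)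
    (m₀ : ℝ) (hm₀ : 1 ≤ m₀) :
    ΔU mu rho m₀ ≥ (3 + 6 * rho + 5 * rho ^ 2) / (3 * lam * (1 + rho)) ∧
    ΔM mu rho m₀ ≥ (1 + 2 * rho + 2 * rho ^ 2) / (lam * (1 + rho)) ∧
    ΔD mu rho m₀ ≥ (2 + 4 * rho + 3 * rho ^ 2) / (2 * lam * (1 + rho)) := by
  subst hlam
  have hm₀_pos : 0 < m₀ := one_pos.trans_le hm₀
  exact ⟨div_le_ΔU hmu hrho hm₀_pos, div_le_ΔM hmu hrho hm₀_pos, div_le_ΔD hmu hrho hm₀_pos⟩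
end

section
/- Fix μ, ρ > 0 and let λ = ρμ. As the real parameter m₀ tends to +∞ (with α = e^{−1/m₀}, β = e^{−ρ/m₀}): Δ_U(m₀) → (3+6ρ+5ρ²)/(3λ(1+ρ)), Δ_M(m₀) → (1+2ρ+2ρ²)/(λ(1+ρ)), and Δ_D(m₀) → (2+4ρ+3ρ²)/(2λ(1+ρ)). In particular, lim_{m₀→∞} (1+α)/(m₀(1−α)) = 2 and lim_{m₀→∞} (1+β)/(m₀(1−β)) = 2/ρ. -/
open Real Filter Topology

lemma aux_key (c : ℝ) :
    Tendsto (fun m : ℝ => m * (1 - Real.exp (-c / m))) atTop (𝓝 c) := by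
  have hd : HasDerivAt (fun x : ℝ => Real.exp (-c * x)) (-c) 0 := by
    have := ((hasDerivAt_id (0:ℝ)).const_mul (-c)).exp
    simpa using this
  have hslope := hasDerivAt_iff_tendsto_slope.mp hd
  have hinv : Tendsto (fun m : ℝ => m⁻¹) atTop (𝓝[≠] (0:ℝ)) := by
    rw [tendsto_nhdsWithin_iff]
    refine ⟨tendsto_inv_atTop_zero, ?_⟩
    filter_upwards [eventually_ge_atTop 1] with m hm
    simp only [Set.mem_compl_iff, Set.mem_singleton_iff]
    positivity
  have h := hslope.comp hinv
  simp only [Function.comp_def, slope_def_field] at h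
  have h2 := h.neg
  simp only [neg_neg, mul_zero, Real.exp_zero] at h2
  refine h2.congr' ?_
  filter_upwards [eventually_ge_atTop 1] with m hm
  have hm0 : m ≠ 0 := by positivity
  rw [div_eq_mul_inv (-c) m]
  field_simp
  ring

lemma aux_arg (c : ℝ) : Tendsto (fun m : ℝ => -c / m) atTop (𝓝 0) := by
  have := tendsto_inv_atTop_zero.const_mul (-c)
  simpa [div_eq_mul_inv, mul_zero] using this

lemma aux_num (c : ℝ) :
    Tendsto (fun m : ℝ => 1 + Real.exp (-c / m)) atTop (𝓝 2) := by
  have h := (Real.continuous_exp.tendsto 0).comp (aux_arg c)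
  have : Tendsto (fun m : ℝ => 1 + Real.exp (-c / m)) atTop (𝓝 (1 + Real.exp 0)) :=
    tendsto_const_nhds.add (by simpa [Function.comp_def] using h)
  norm_num at this
  exact this

lemma aux_ratio (c : ℝ) (hc : 0 < c) :
    Tendsto (fun m : ℝ => (1 + Real.exp (-c / m)) / (m * (1 - Real.exp (-c / m))))
      atTop (𝓝 (2 / c)) := by
  exact (aux_num c).div (aux_key c) hc.ne'

lemma aux_inv : Tendsto (fun m : ℝ => m⁻¹) atTop (𝓝 (0:ℝ)) := tendsto_inv_atTop_zero

/-- As `m₀ → ∞`, the average AuDs of the M/U/1/1-D, M/M/1/1-D and M/D/1/1-D bufferless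
systems tend to the AuDs of the corresponding systems with Poisson decisions (`λ = ρμ`);
in particular `(1+α)/(m₀(1−α)) → 2` and `(1+β)/(m₀(1−β)) → 2/ρ`. -/
theorem stmt_19 (mu rho lam : ℝ) (hmu : 0 < mu) (hrho : 0 < rho) (hlam : lam = rho * mu) :
    Tendsto (fun m₀ : ℝ => ΔU mu rho m₀) atTop
        (𝓝 ((3 + 6 * rho + 5 * rho ^ 2) / (3 * lam * (1 + rho)))) ∧
    Tendsto (fun m₀ : ℝ => ΔM mu rho m₀) atTop
        (𝓝 ((1 + 2 * rho + 2 * rho ^ 2) / (lam * (1 + rho)))) ∧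
    Tendsto (fun m₀ : ℝ => ΔD mu rho m₀) atTop
        (𝓝 ((2 + 4 * rho + 3 * rho ^ 2) / (2 * lam * (1 + rho)))) ∧
    Tendsto (fun m₀ : ℝ =>
        (1 + Real.exp (-1 / m₀)) / (m₀ * (1 - Real.exp (-1 / m₀)))) atTop (𝓝 2) ∧
    Tendsto (fun m₀ : ℝ =>
        (1 + Real.exp (-rho / m₀)) / (m₀ * (1 - Real.exp (-rho / m₀)))) atTop (𝓝 (2 / rho)) := by
  have hmu' : mu ≠ 0 := hmu.ne'
  have hrho' : rho ≠ 0 := hrho.ne'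
  have hr1 : (1 : ℝ) + rho ≠ 0 := by positivity
  have h1 : Tendsto (fun m : ℝ =>
      (1 + Real.exp (-(1:ℝ) / m)) / (m * (1 - Real.exp (-(1:ℝ) / m)))) atTop (𝓝 2) := by
    have := aux_ratio 1 one_pos
    simpa using this
  have hbeta := aux_ratio rho hrho
  -- eventual positivity facts
  have hev : ∀ᶠ m : ℝ in atTop, (0:ℝ) < m ∧ Real.exp (-rho / m) < 1 ∧ Real.exp (-(1:ℝ)/m) < 1 := by
    filter_upwards [eventually_ge_atTop 1] with m hm
    have hm0 : (0:ℝ) < m := lt_of_lt_of_le one_pos hm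
    refine ⟨hm0, ?_, ?_⟩
    · rw [Real.exp_lt_one_iff]
      exact div_neg_of_neg_of_pos (by linarith) hm0
    · rw [Real.exp_lt_one_iff]
      exact div_neg_of_neg_of_pos (by norm_num) hm0
  refine ⟨?_, ?_, ?_, h1, hbeta⟩
  · -- ΔU
    have hT : Tendsto (fun m : ℝ =>
        ((2*rho+4)/(2*mu*(1+rho)) + (rho+1)/(2*mu*(1+rho)) * m⁻¹)
        + ((1 + Real.exp (-rho / m)) / (m * (1 - Real.exp (-rho / m)))) * (2*mu*(1+rho))⁻¹
        + (rho/(12*mu*(1+rho))) * (8 + 18*m⁻¹ + 13*m⁻¹^2 + 3*m⁻¹^3)) atTop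
        (𝓝 (((2*rho+4)/(2*mu*(1+rho)) + (rho+1)/(2*mu*(1+rho)) * 0)
          + (2/rho) * (2*mu*(1+rho))⁻¹
          + (rho/(12*mu*(1+rho))) * (8 + 18*0 + 13*0^2 + 3*0^3))) := by
      refine Tendsto.add (Tendsto.add ?_ ?_) ?_
      · exact tendsto_const_nhds.add (tendsto_const_nhds.mul aux_inv)
      · exact hbeta.mul tendsto_const_nhds
      · refine tendsto_const_nhds.mul ?_
        refine Tendsto.add (Tendsto.add (Tendsto.add tendsto_const_nhds
          (tendsto_const_nhds.mul aux_inv)) (tendsto_const_nhds.mul (aux_inv.pow 2)))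
          (tendsto_const_nhds.mul (aux_inv.pow 3))
    have heq : (((2*rho+4)/(2*mu*(1+rho)) + (rho+1)/(2*mu*(1+rho)) * 0)
          + (2/rho) * (2*mu*(1+rho))⁻¹
          + (rho/(12*mu*(1+rho))) * (8 + 18*0 + 13*0^2 + 3*0^3))
        = (3 + 6 * rho + 5 * rho ^ 2) / (3 * lam * (1 + rho)) := by
      subst hlam; field_simp; ring
    rw [heq] at hT
    refine hT.congr' ?_
    filter_upwards [hev] with m ⟨hm0, hb, _⟩
    have hm' : m ≠ 0 := hm0.ne'
    have hb' : 1 - Real.exp (-rho / m) ≠ 0 := by linarith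
    unfold ΔU
    field_simp
    ring
  · -- ΔM
    have hT : Tendsto (fun m : ℝ =>
        (2 + rho) / (mu * (1 + rho))
        + rho * ((1 + Real.exp (-(1:ℝ) / m)) / (m * (1 - Real.exp (-(1:ℝ) / m)))) * (2*mu*(1+rho))⁻¹
        + ((1 + Real.exp (-rho / m)) / (m * (1 - Real.exp (-rho / m)))) * (2*mu*(1+rho))⁻¹) atTop
        (𝓝 ((2 + rho) / (mu * (1 + rho)) + rho * 2 * (2*mu*(1+rho))⁻¹
          + (2/rho) * (2*mu*(1+rho))⁻¹)) := by
      refine Tendsto.add (Tendsto.add tendsto_const_nhds ?_) (hbeta.mul tendsto_const_nhds)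
      exact ((tendsto_const_nhds.mul h1)).mul tendsto_const_nhds
    have heq : ((2 + rho) / (mu * (1 + rho)) + rho * 2 * (2*mu*(1+rho))⁻¹
          + (2/rho) * (2*mu*(1+rho))⁻¹)
        = (1 + 2 * rho + 2 * rho ^ 2) / (lam * (1 + rho)) := by
      subst hlam; field_simp; ring
    rw [heq] at hT
    refine hT.congr' ?_
    filter_upwards [hev] with m ⟨hm0, hb, ha⟩
    have hm' : m ≠ 0 := hm0.ne'
    have hb' : 1 - Real.exp (-rho / m) ≠ 0 := by linarith
    have ha' : 1 - Real.exp (-(1:ℝ) / m) ≠ 0 := by linarith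
    unfold ΔM
    field_simp
  · -- ΔD
    have hT : Tendsto (fun m : ℝ =>
        (4 + 3 * rho) / (2 * mu * (1 + rho))
        + ((1 + Real.exp (-rho / m)) / (m * (1 - Real.exp (-rho / m)))) * (2*mu*(1+rho))⁻¹) atTop
        (𝓝 ((4 + 3 * rho) / (2 * mu * (1 + rho)) + (2/rho) * (2*mu*(1+rho))⁻¹)) :=
      tendsto_const_nhds.add (hbeta.mul tendsto_const_nhds)
    have heq : ((4 + 3 * rho) / (2 * mu * (1 + rho)) + (2/rho) * (2*mu*(1+rho))⁻¹)
        = (2 + 4 * rho + 3 * rho ^ 2) / (2 * lam * (1 + rho)) := by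
      subst hlam; field_simp; ring
    rw [heq] at hT
    refine hT.congr' ?_
    filter_upwards [hev] with m ⟨hm0, hb, _⟩
    have hm' : m ≠ 0 := hm0.ne'
    have hb' : 1 - Real.exp (-rho / m) ≠ 0 := by linarith
    unfold ΔD
    field_simp
end
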